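/- Let E ∈ ℝ^{n₁×n₂} be α-sparse. Then for every row index j, the double sum Σ_{h₁,h₂} (EEᵀ)_{j,h₁}·(EEᵀ)_{j,h₂} is at most (α·√(n₁n₂)·‖E‖_∞)⁴, where the sum is over the absolute values of entries (each factor (EEᵀ)_{j,h} replaced by its absolute value). -/

import Mathlib

open Matrix Real

/-- Entrywise supremum norm `‖E‖_∞ = max_{i,j} |E i j|`. -/
noncomputable def entrySup {m n : ℕ} (E : Matrix (Fin m) (Fin n) ℝ) : ℝ :=
  ⨆ i, ⨆ j, |E i j|

/-- A matrix is `α`-sparse: at most `α·m` nonzero entries per column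
and at most `α·n` nonzero entries per row. -/
def IsAlphaSparse {m n : ℕ} (α : ℝ) (E : Matrix (Fin m) (Fin n) ℝ) : Prop :=
  (∀ j, ((Finset.univ.filter fun i => E i j ≠ 0).card : ℝ) ≤ α * m) ∧
  (∀ i, ((Finset.univ.filter fun j => E i j ≠ 0).card : ℝ) ≤ α * n)

/-- Spectral (operator) norm of a matrix, via the Euclidean spaces. -/
noncomputable def matSpectralNorm {m n : ℕ} (A : Matrix (Fin m) (Fin n) ℝ) : ℝ :=
  ‖LinearMap.toContinuousLinearMap (Matrix.toEuclideanLin A)‖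

/-- Frobenius norm. -/
noncomputable def frobNorm {m n : ℕ} (A : Matrix (Fin m) (Fin n) ℝ) : ℝ :=
  Real.sqrt (∑ i, ∑ j, (A i j) ^ 2)

/-- Euclidean norm of the `i`-th row of a matrix. -/
noncomputable def rowNorm {m n : ℕ} (A : Matrix (Fin m) (Fin n) ℝ) (i : Fin m) : ℝ :=
  Real.sqrt (∑ j, (A i j) ^ 2)

/-- `μ`-incoherence: every row has Euclidean norm at most `μ√r/√m`. -/
def IsIncoherent {m r : ℕ} (μ : ℝ) (U : Matrix (Fin m) (Fin r) ℝ) : Prop :=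
  ∀ i, rowNorm U i ≤ μ * Real.sqrt r / Real.sqrt m

/-! If every row has at most `α n₂` and every column at most `α n₁` nonzero entries, all bounded
by `M = ‖E‖_∞`, then each row of `|E| |E|ᵀ` has sum at most `(α n₂ M)(α n₁ M)`. The double sum
is the square of that row sum. -/

lemma sum_abs_le_card_filter_ne_zero_mul {ι : Type*} [Fintype ι]
    {f : ι → ℝ} {M : ℝ} (hf : ∀ i, |f i| ≤ M) :
    ∑ i, |f i| ≤ (Finset.univ.filter fun i => f i ≠ 0).card * M := by
  rw [← Finset.sum_filter_of_ne fun i _ hi => abs_ne_zero.mp hi, ← nsmul_eq_mul]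
  exact Finset.sum_le_card_nsmul _ _ _ fun i _ => hf i

lemma Matrix.sum_abs_mul_apply_le {ι κ ν : Type*} [Fintype κ] [Fintype ν]
    (A : Matrix ι κ ℝ) (B : Matrix κ ν ℝ) (i : ι) :
    ∑ l, |(A * B) i l| ≤ ∑ k, |A i k| * ∑ l, |B k l| :=
  calc ∑ l, |(A * B) i l| ≤ ∑ l, ∑ k, |A i k| * |B k l| :=
        Finset.sum_le_sum fun l _ => (Finset.abs_sum_le_sum_abs _ _).trans_eq <| by
          simp only [abs_mul]
    _ = ∑ k, |A i k| * ∑ l, |B k l| := by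
        rw [Finset.sum_comm]; simp only [Finset.mul_sum]

section entrySup

variable {m n : ℕ} (E : Matrix (Fin m) (Fin n) ℝ)

lemma abs_le_entrySup (i : Fin m) (j : Fin n) : |E i j| ≤ entrySup E :=
  (le_ciSup (Finite.bddAbove_range fun j => |E i j|) j).trans <|
    le_ciSup (Finite.bddAbove_range fun i => ⨆ j, |E i j|) i

lemma entrySup_nonneg : 0 ≤ entrySup E :=
  Real.iSup_nonneg fun _ => Real.iSup_nonneg fun _ => abs_nonneg _

end entrySup

namespace IsAlphaSparse

variable {m n : ℕ} {α : ℝ} {E : Matrix (Fin m) (Fin n) ℝ}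

lemma sum_abs_col_le (hE : IsAlphaSparse α E) (j : Fin n) :
    ∑ i, |E i j| ≤ α * m * entrySup E :=
  (sum_abs_le_card_filter_ne_zero_mul fun i => abs_le_entrySup E i j).trans <|
    mul_le_mul_of_nonneg_right (hE.1 j) (entrySup_nonneg E)

lemma sum_abs_row_le (hE : IsAlphaSparse α E) (i : Fin m) :
    ∑ j, |E i j| ≤ α * n * entrySup E :=
  (sum_abs_le_card_filter_ne_zero_mul fun j => abs_le_entrySup E i j).trans <|
    mul_le_mul_of_nonneg_right (hE.2 i) (entrySup_nonneg E)

lemma sum_abs_mul_transpose_apply_le (hE : IsAlphaSparse α E) (i : Fin m) :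
    ∑ h, |(E * Eᵀ) i h| ≤ (α * n * entrySup E) * (α * m * entrySup E) := by
  rcases n.eq_zero_or_pos with rfl | hn
  · simp [Matrix.mul_apply]
  -- a nonempty column makes `α m` an upper bound of a cardinality, hence nonnegative
  have hcol_nonneg : 0 ≤ α * m * entrySup E :=
    mul_nonneg ((Nat.cast_nonneg _).trans (hE.1 ⟨0, hn⟩)) (entrySup_nonneg E)
  calc ∑ h, |(E * Eᵀ) i h| ≤ ∑ j, |E i j| * ∑ h, |E h j| := Matrix.sum_abs_mul_apply_le E Eᵀ i
    _ ≤ ∑ j, |E i j| * (α * m * entrySup E) :=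
        Finset.sum_le_sum fun j _ => mul_le_mul_of_nonneg_left (hE.sum_abs_col_le j) (abs_nonneg _)
    _ = (∑ j, |E i j|) * (α * m * entrySup E) := (Finset.sum_mul ..).symm
    _ ≤ (α * n * entrySup E) * (α * m * entrySup E) :=
        mul_le_mul_of_nonneg_right (hE.sum_abs_row_le i) hcol_nonneg

end IsAlphaSparse

theorem sparse_double_sum_bound {n₁ n₂ : ℕ} (α : ℝ)
    (E : Matrix (Fin n₁) (Fin n₂) ℝ) (hE : IsAlphaSparse α E) (j : Fin n₁) :
    ∑ h₁, ∑ h₂, |(E * Eᵀ) j h₁| * |(E * Eᵀ) j h₂| ≤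
      (α * Real.sqrt (n₁ * n₂) * entrySup E) ^ 4 := by
  have hsqrt : Real.sqrt (n₁ * n₂) ^ 2 = n₁ * n₂ := Real.sq_sqrt (by positivity)
  calc ∑ h₁, ∑ h₂, |(E * Eᵀ) j h₁| * |(E * Eᵀ) j h₂| = (∑ h, |(E * Eᵀ) j h|) ^ 2 := by
        rw [sq, Finset.sum_mul_sum]
    _ ≤ ((α * n₂ * entrySup E) * (α * n₁ * entrySup E)) ^ 2 :=
        pow_le_pow_left₀ (Finset.sum_nonneg fun _ _ => abs_nonneg _)
          (hE.sum_abs_mul_transpose_apply_le j) 2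
    _ = (α * Real.sqrt (n₁ * n₂) * entrySup E) ^ 4 := by
        rw [show (α * Real.sqrt (n₁ * n₂) * entrySup E) ^ 4
            = α ^ 4 * (Real.sqrt (n₁ * n₂) ^ 2) ^ 2 * entrySup E ^ 4 by ring, hsqrt]
        ring
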